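/- Let Y be a real random variable on a probability space with 𝔼[e^Y] = 1, 𝔼[|Y|] < ∞ and 𝔼[|Y| e^Y] < ∞, let r ∈ ℝ, T > 0, and let Y∧ be a Gaussian random variable with mean −T/2 and variance T. Define V(k) = e^{−rT} 𝔼[(e^{rT+Y} − e^k)^+], the smooth offset term V∧(k) = e^{−rT} 𝔼[(e^{rT+Y∧} − e^k)^+], and the modified price V̂(k) = V(k) − V∧(k). Then V̂ is integrable on ℝ and for every real z ≠ 0, ∫_ℝ e^{izk} V̂(k) dk = (1/(iz(iz+1))) · e^{izrT} · (𝔼[e^{(1+iz)Y}] − 𝔼[e^{(1+iz)Y∧}]). -/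

import Mathlib

open MeasureTheory Complex Real ProbabilityTheory Set
open scoped Interval NNReal

/-!
Discounting and shifting the log-strike by `rT` turns `V` and `V∧` into call prices
`𝔼[(e^X - e^k)^+]` on a forward of `1`, and both contain the same intrinsic value
`(1 - e^k)^+`, which therefore cancels in `V̂`. What is left of each is the call's time value.
By put–call parity and `𝔼[e^X] = 1` the time value is `𝔼[P(k, X)]`, where `P(k, y)` is the payoff
of the out-of-the-money option with log-strike `k` (a put for `k < 0`, a call for `k ≥ 0`).
Since `P ≥ 0` and `∫ P(k, y) dk = y e^y - e^y + 1`, the moment condition `𝔼[|X| e^X] < ∞` gives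
integrability by Tonelli, and Fubini reduces the Fourier transform to the elementary one of
`P(·, y)`, namely `(e^{(1+c)y} - 1) / (c (1+c)) - (e^y - 1) / c` with `c = iz`; the last term has
expectation `0`. The Gaussian `Y∧` satisfies the same moment conditions.
-/

noncomputable def otmPayoff (k y : ℝ) : ℝ :=
  if k < 0 then max (rexp k - rexp y) 0 else max (rexp y - rexp k) 0

lemma otmPayoff_nonneg (k y : ℝ) : 0 ≤ otmPayoff k y := by
  unfold otmPayoff; split <;> exact le_max_right _ _

lemma measurable_otmPayoff : Measurable (Function.uncurry otmPayoff) := by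
  unfold otmPayoff
  exact Measurable.ite (measurableSet_lt measurable_fst measurable_const) (by fun_prop)
    (by fun_prop)

lemma otmPayoff_ae_eq_indicator (y : ℝ) :
    (otmPayoff · y) =ᵐ[volume] (Ι 0 y).indicator fun k => |rexp y - rexp k| := by
  filter_upwards [compl_mem_ae_iff.mpr (measure_singleton (0 : ℝ))] with k (hk : k ≠ 0)
  rcases hk.lt_or_gt with hk | hk
  · by_cases hyk : y < k
    · have := exp_lt_exp.2 hyk
      rw [indicator_of_mem (by simp [mem_uIoc]; grind), abs_of_neg (by linarith)]
      simp [otmPayoff, hk, this.le]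
    · have := exp_le_exp.2 (not_lt.1 hyk)
      rw [indicator_of_notMem (by simp [mem_uIoc]; grind)]
      simp [otmPayoff, hk, this]
  · by_cases hky : k ≤ y
    · have := exp_le_exp.2 hky
      rw [indicator_of_mem (by simp [mem_uIoc]; grind), abs_of_nonneg (by linarith)]
      simp [otmPayoff, hk.not_gt, this]
    · have := exp_lt_exp.2 (not_le.1 hky)
      rw [indicator_of_notMem (by simp [mem_uIoc]; grind)]
      simp [otmPayoff, hk.not_gt, this.le]

lemma integral_otmPayoff_smul {E : Type*} [NormedAddCommGroup E] [NormedSpace ℝ E]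
    (g : ℝ → E) (y : ℝ) :
    ∫ k, otmPayoff k y • g k = ∫ k in 0..y, (rexp y - rexp k) • g k := by
  have hsign : ∀ k ∈ Ι 0 y,
      |rexp y - rexp k| • g k =
        (if 0 ≤ y then 1 else -1 : ℝ) • (rexp y - rexp k) • g k := by
    intro k hk
    rw [smul_smul]
    split_ifs with hy
    · rw [uIoc_of_le hy] at hk
      rw [one_mul, abs_of_nonneg (sub_nonneg.2 (exp_le_exp.2 hk.2))]
    · rw [uIoc_of_ge (not_le.1 hy).le] at hk
      rw [neg_one_mul, abs_of_neg (sub_neg.2 (exp_lt_exp.2 hk.1))]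
  calc ∫ k, otmPayoff k y • g k
      = ∫ k, (Ι 0 y).indicator (fun k => |rexp y - rexp k| • g k) k := by
        refine integral_congr_ae ?_
        filter_upwards [otmPayoff_ae_eq_indicator y] with k hk
        rw [hk, indicator_smul_apply_left]
    _ = ∫ k in Ι 0 y, |rexp y - rexp k| • g k := integral_indicator measurableSet_uIoc
    _ = ∫ k in Ι 0 y, (if 0 ≤ y then 1 else -1 : ℝ) • (rexp y - rexp k) • g k :=
        setIntegral_congr_fun measurableSet_uIoc hsign
    _ = ∫ k in 0..y, (rexp y - rexp k) • g k := by
        rw [integral_smul, intervalIntegral.intervalIntegral_eq_integral_uIoc]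

lemma integrable_otmPayoff (y : ℝ) : Integrable (otmPayoff · y) := by
  refine Integrable.congr ?_ (otmPayoff_ae_eq_indicator y).symm
  exact (Continuous.integrableOn_uIoc (by fun_prop)).integrable_indicator measurableSet_uIoc

lemma integral_otmPayoff (y : ℝ) : ∫ k, otmPayoff k y = y * rexp y - rexp y + 1 := by
  simpa [intervalIntegral.integral_sub, integral_exp, sub_add] using
    integral_otmPayoff_smul (fun _ => (1 : ℝ)) y

lemma integral_otmPayoff_smul_cexp {c : ℂ} (hc : c ≠ 0) (hc₁ : 1 + c ≠ 0) (y : ℝ) :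
    ∫ k, otmPayoff k y • cexp (c * k) =
      (cexp ((1 + c) * y) - rexp y) / c - (cexp ((1 + c) * y) - 1) / (1 + c) := by
  have hsplit : ∀ k : ℝ, (rexp y - rexp k) • cexp (c * k) =
      rexp y * cexp (c * k) - cexp ((1 + c) * k) := by
    intro k
    rw [Complex.real_smul, add_mul, one_mul, Complex.exp_add]
    push_cast
    ring
  rw [integral_otmPayoff_smul, intervalIntegral.integral_congr (fun k _ => hsplit k),
    intervalIntegral.integral_sub (Continuous.intervalIntegrable (by fun_prop) _ _)
      (Continuous.intervalIntegrable (by fun_prop) _ _),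
    intervalIntegral.integral_const_mul, integral_exp_mul_complex hc,
    integral_exp_mul_complex hc₁]
  simp only [ofReal_zero, mul_zero, Complex.exp_zero, add_mul, one_mul, Complex.exp_add,
    ofReal_exp]
  ring

section TimeValue

variable {Ω : Type*} [MeasurableSpace Ω] {μ : Measure Ω} {X : Ω → ℝ}

noncomputable def callTimeValue (μ : Measure Ω) (X : Ω → ℝ) (k : ℝ) : ℝ :=
  ∫ ω, max (rexp (X ω) - rexp k) 0 ∂μ - max (1 - rexp k) 0

lemma integrable_otmPayoff_prod [IsFiniteMeasure μ] (hX : Measurable X)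
    (hexp : Integrable (fun ω => rexp (X ω)) μ)
    (hXexp : Integrable (fun ω => |X ω| * rexp (X ω)) μ) :
    Integrable (fun p : ℝ × Ω => otmPayoff p.1 (X p.2)) (volume.prod μ) := by
  have hmeas : Measurable fun p : ℝ × Ω => otmPayoff p.1 (X p.2) :=
    measurable_otmPayoff.comp (measurable_fst.prodMk (hX.comp measurable_snd))
  refine (integrable_prod_iff' hmeas.aestronglyMeasurable).2
    ⟨ae_of_all _ fun ω => integrable_otmPayoff (X ω), ?_⟩
  have hXexp' : Integrable (fun ω => X ω * rexp (X ω)) μ :=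
    hXexp.mono' (by fun_prop) (ae_of_all _ fun ω => by simp)
  simp only [norm_of_nonneg (otmPayoff_nonneg _ _), integral_otmPayoff]
  exact (hXexp'.sub hexp).add (integrable_const 1)

variable [IsProbabilityMeasure μ]

lemma callTimeValue_eq_integral_otmPayoff (hexp : Integrable (fun ω => rexp (X ω)) μ)
    (hmart : ∫ ω, rexp (X ω) ∂μ = 1) (k : ℝ) :
    callTimeValue μ X k = ∫ ω, otmPayoff k (X ω) ∂μ := by
  unfold callTimeValue otmPayoff
  by_cases hk : k < 0
  · -- put–call parity, the forward `𝔼[e^X]` being `1`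
    have hexpk : rexp k < 1 := Real.exp_lt_one_iff.2 hk
    have hfwd : Integrable (fun ω => rexp (X ω) - rexp k) μ := hexp.sub (integrable_const _)
    have hparity : ∀ ω, max (rexp k - rexp (X ω)) 0 =
        max (rexp (X ω) - rexp k) 0 - (rexp (X ω) - rexp k) := by
      intro ω
      rcases le_total (rexp (X ω)) (rexp k) with h | h
      · rw [max_eq_left (by linarith), max_eq_right (by linarith)]; ring
      · rw [max_eq_right (by linarith), max_eq_left (by linarith)]; ring
    simp only [hk, if_true, hparity]
    rw [integral_sub hfwd.pos_part hfwd, integral_sub hexp (integrable_const _), hmart,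
      max_eq_left (by linarith)]
    simp
  · have hexpk : 1 ≤ rexp k := one_le_exp (not_lt.1 hk)
    simp [hk, max_eq_right (sub_nonpos.2 hexpk)]

lemma integrable_callTimeValue (hX : Measurable X) (hexp : Integrable (fun ω => rexp (X ω)) μ)
    (hmart : ∫ ω, rexp (X ω) ∂μ = 1) (hXexp : Integrable (fun ω => |X ω| * rexp (X ω)) μ) :
    Integrable (callTimeValue μ X) := by
  refine (integrable_otmPayoff_prod hX hexp hXexp).integral_prod_left.congr (ae_of_all _ ?_)
  exact fun k => (callTimeValue_eq_integral_otmPayoff hexp hmart k).symm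

lemma integral_cexp_mul_callTimeValue (hX : Measurable X)
    (hexp : Integrable (fun ω => rexp (X ω)) μ) (hmart : ∫ ω, rexp (X ω) ∂μ = 1)
    (hXexp : Integrable (fun ω => |X ω| * rexp (X ω)) μ) {z : ℝ} (hz : z ≠ 0) :
    ∫ k : ℝ, cexp (I * z * k) * callTimeValue μ X k =
      (∫ ω, cexp ((1 + I * z) * X ω) ∂μ - 1) / (I * z * (I * z + 1)) := by
  have hz' : (z : ℂ) ≠ 0 := ofReal_ne_zero.2 hz
  have hIz : I * z ≠ 0 := mul_ne_zero I_ne_zero hz'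
  have hIz₁ : 1 + I * z ≠ 0 := fun h => by simpa using congrArg Complex.re h
  have hprod := integrable_otmPayoff_prod hX hexp hXexp
  have hswap : Integrable (fun p : ℝ × Ω => otmPayoff p.1 (X p.2) • cexp (I * z * p.1))
      (volume.prod μ) := by
    refine hprod.mono' (hprod.aestronglyMeasurable.smul (Measurable.aestronglyMeasurable
      (by fun_prop))) (ae_of_all _ fun p => ?_)
    simp [Complex.norm_exp, norm_of_nonneg (otmPayoff_nonneg _ _)]
  have hcexp : Integrable (fun ω => cexp ((1 + I * z) * X ω)) μ :=
    hexp.mono' (by fun_prop) (ae_of_all _ fun ω => by simp [Complex.norm_exp])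
  have hexp' : Integrable (fun ω => (rexp (X ω) : ℂ)) μ := hexp.ofReal
  have hmart' : ∫ ω, (rexp (X ω) : ℂ) ∂μ = 1 := by
    rw [integral_complex_ofReal, hmart, ofReal_one]
  calc ∫ k : ℝ, cexp (I * z * k) * callTimeValue μ X k
      = ∫ k : ℝ, ∫ ω, otmPayoff k (X ω) • cexp (I * z * k) ∂μ := by
        refine integral_congr_ae (ae_of_all _ fun k => ?_)
        dsimp only
        rw [callTimeValue_eq_integral_otmPayoff hexp hmart, mul_comm, ← Complex.real_smul,
          integral_smul_const]
    _ = ∫ ω, (∫ k : ℝ, otmPayoff k (X ω) • cexp (I * z * k)) ∂μ := integral_integral_swap hswap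
    _ = ∫ ω, ((cexp ((1 + I * z) * X ω) - rexp (X ω)) / (I * z)
          - (cexp ((1 + I * z) * X ω) - 1) / (1 + I * z)) ∂μ :=
        integral_congr_ae (ae_of_all _ fun ω => integral_otmPayoff_smul_cexp hIz hIz₁ (X ω))
    _ = (∫ ω, cexp ((1 + I * z) * X ω) ∂μ - 1) / (I * z)
          - (∫ ω, cexp ((1 + I * z) * X ω) ∂μ - 1) / (1 + I * z) := by
        have hcall : Integrable (fun ω => (cexp ((1 + I * z) * X ω) - rexp (X ω)) / (I * z)) μ :=
          (hcexp.sub hexp').div_const _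
        have hput : Integrable (fun ω => (cexp ((1 + I * z) * X ω) - 1) / (1 + I * z)) μ :=
          (hcexp.sub (integrable_const _)).div_const _
        rw [integral_sub hcall hput, integral_div, integral_div,
          integral_sub hcexp hexp', integral_sub hcexp (integrable_const _), hmart']
        simp
    _ = _ := by rw [add_comm (I * z) 1]; field_simp; ring

end TimeValue

lemma exp_neg_mul_integral_max_exp_add {Ω : Type*} [MeasurableSpace Ω] (μ : Measure Ω)
    (X : Ω → ℝ) (a k : ℝ) :
    rexp (-a) * ∫ ω, max (rexp (a + X ω) - rexp k) 0 ∂μ =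
      ∫ ω, max (rexp (X ω) - rexp (k - a)) 0 ∂μ := by
  rw [← integral_const_mul]
  congr with ω
  rw [mul_max_of_nonneg _ _ (exp_pos _).le, mul_zero, mul_sub, ← Real.exp_add, ← Real.exp_add]
  ring_nf

lemma integral_cexp_mul_comp_sub (f : ℝ → ℂ) (z a : ℝ) :
    ∫ k : ℝ, cexp (I * z * k) * f (k - a) =
      cexp (I * z * a) * ∫ k : ℝ, cexp (I * z * k) * f k := by
  calc ∫ k : ℝ, cexp (I * z * k) * f (k - a)
      = ∫ k : ℝ, cexp (I * z * a) * (cexp (I * z * (k - a : ℝ)) * f (k - a)) := by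
        congr with k
        rw [← mul_assoc, ← Complex.exp_add]
        push_cast
        ring_nf
    _ = cexp (I * z * a) * ∫ k : ℝ, cexp (I * z * k) * f k := by
        rw [integral_const_mul,
          integral_sub_right_eq_self (fun k : ℝ => cexp (I * z * k) * f k) a]

lemma MeasureTheory.Integrable.cexp_mul_ofReal {f : ℝ → ℝ} (hf : Integrable f) (z : ℝ) :
    Integrable (fun k : ℝ => cexp (I * z * k) * f k) :=
  hf.ofReal.bdd_mul (c := 1) (by fun_prop) (ae_of_all _ fun k => by simp [Complex.norm_exp])

lemma integral_exp_gaussianReal (m : ℝ) (v : ℝ≥0) :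
    ∫ y, rexp y ∂gaussianReal m v = rexp (m + v / 2) := by
  simpa [mgf] using congrFun (mgf_id_gaussianReal (μ := m) (v := v)) 1

lemma integrable_abs_mul_exp_gaussianReal (m : ℝ) (v : ℝ≥0) :
    Integrable (fun y => |y| * rexp y) (gaussianReal m v) := by
  simpa using integrable_pow_abs_mul_exp_of_mem_interior_integrableExpSet
    (X := id) (μ := gaussianReal m v) (v := 1) (by simp) 1

theorem soa_european_general
    {Ω : Type*} [MeasurableSpace Ω] (μ : Measure Ω) [IsProbabilityMeasure μ]
    (Y : Ω → ℝ) (hYm : Measurable Y)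
    (hexpYint : Integrable (fun ω => Real.exp (Y ω)) μ)
    (hmart : ∫ ω, Real.exp (Y ω) ∂μ = 1)
    (hYexpYint : Integrable (fun ω => |Y ω| * Real.exp (Y ω)) μ)
    (r T : ℝ) (hT : 0 < T)
    (V Vwedge Vhat : ℝ → ℝ)
    (hV : ∀ k, V k = Real.exp (-(r * T)) *
      ∫ ω, max (Real.exp (r * T + Y ω) - Real.exp k) 0 ∂μ)
    (hVwedge : ∀ k, Vwedge k = Real.exp (-(r * T)) *
      ∫ y, max (Real.exp (r * T + y) - Real.exp k) 0
        ∂(gaussianReal (-(T / 2)) (Real.toNNReal T)))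
    (hVhat : ∀ k, Vhat k = V k - Vwedge k) :
    Integrable Vhat volume ∧
      ∀ z : ℝ, z ≠ 0 →
        ∫ k : ℝ, Complex.exp (Complex.I * z * k) * (Vhat k : ℂ) =
          (1 / (Complex.I * z * (Complex.I * z + 1))) *
            Complex.exp (Complex.I * z * (r * T)) *
            ((∫ ω, Complex.exp ((1 + Complex.I * z) * (Y ω : ℂ)) ∂μ) -
              ∫ y, Complex.exp ((1 + Complex.I * z) * (y : ℂ))
                ∂(gaussianReal (-(T / 2)) (Real.toNNReal T))) := by
  set γ := gaussianReal (-(T / 2)) (Real.toNNReal T)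
  have hγexp : Integrable rexp γ := by
    simpa using integrable_exp_mul_gaussianReal (μ := -(T / 2)) (v := T.toNNReal) 1
  have hγmart : ∫ y, rexp y ∂γ = 1 := by
    simp [γ, integral_exp_gaussianReal, Real.coe_toNNReal _ hT.le]
  have hγexpabs := integrable_abs_mul_exp_gaussianReal (-(T / 2)) T.toNNReal
  have hintY := integrable_callTimeValue hYm hexpYint hmart hYexpYint
  have hintγ := integrable_callTimeValue measurable_id hγexp hγmart hγexpabs
  set D : ℝ → ℝ := fun k => callTimeValue μ Y k - callTimeValue γ id k with hD
  have hVhat' : Vhat = fun k => D (k - r * T) := by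
    ext k
    simp only [hVhat, hV, hVwedge, exp_neg_mul_integral_max_exp_add, hD, callTimeValue, id]
    ring
  subst hVhat'
  refine ⟨(hintY.sub hintγ).comp_sub_right (r * T), fun z hz => ?_⟩
  have hfourier : ∫ k : ℝ, cexp (I * z * k) * D k =
      (∫ ω, cexp ((1 + I * z) * Y ω) ∂μ - ∫ y, cexp ((1 + I * z) * y) ∂γ) /
        (I * z * (I * z + 1)) := by
    simp only [hD, ofReal_sub, mul_sub]
    rw [integral_sub (hintY.cexp_mul_ofReal z) (hintγ.cexp_mul_ofReal z),
      integral_cexp_mul_callTimeValue hYm hexpYint hmart hYexpYint hz,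
      integral_cexp_mul_callTimeValue measurable_id hγexp hγmart hγexpabs hz]
    simp only [id_eq]
    ring
  rw [integral_cexp_mul_comp_sub (fun k => (D k : ℂ)), hfourier, ofReal_mul]
  ring

/-- SOA (smooth offset) Fourier transform identity for European options
(European case of the paper's Theorem 3.1). -/
theorem soa_european
    {Ω : Type*} [MeasurableSpace Ω] (μ : Measure Ω) [IsProbabilityMeasure μ]
    (Y : Ω → ℝ) (hYm : Measurable Y)
    (hYint : Integrable Y μ)
    (hexpYint : Integrable (fun ω => Real.exp (Y ω)) μ)
    (hmart : ∫ ω, Real.exp (Y ω) ∂μ = 1)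
    (hYexpYint : Integrable (fun ω => |Y ω| * Real.exp (Y ω)) μ)
    (r T : ℝ) (hT : 0 < T)
    (V Vwedge Vhat : ℝ → ℝ)
    (hV : ∀ k, V k = Real.exp (-(r * T)) *
      ∫ ω, max (Real.exp (r * T + Y ω) - Real.exp k) 0 ∂μ)
    (hVwedge : ∀ k, Vwedge k = Real.exp (-(r * T)) *
      ∫ y, max (Real.exp (r * T + y) - Real.exp k) 0
        ∂(gaussianReal (-(T / 2)) (Real.toNNReal T)))
    (hVhat : ∀ k, Vhat k = V k - Vwedge k) :
    Integrable Vhat volume ∧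
      ∀ z : ℝ, z ≠ 0 →
        ∫ k : ℝ, Complex.exp (Complex.I * z * k) * (Vhat k : ℂ) =
          (1 / (Complex.I * z * (Complex.I * z + 1))) *
            Complex.exp (Complex.I * z * (r * T)) *
            ((∫ ω, Complex.exp ((1 + Complex.I * z) * (Y ω : ℂ)) ∂μ) -
              ∫ y, Complex.exp ((1 + Complex.I * z) * (y : ℂ))
                ∂(gaussianReal (-(T / 2)) (Real.toNNReal T))) :=
  soa_european_general μ Y hYm hexpYint hmart hYexpYint r T hT V Vwedge Vhat hV hVwedge hVhat
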